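/- Let C ⊆ [0,1] be a nowhere dense set. Then for every ε > 0, the set H_ε(C) = {φ ∈ H⁺ : there are no x ∈ ℝ and d ≥ ε with x, x+d, x+2d ∈ φ(C)} is dense in H⁺ (with the topology of the supremum norm). -/

import Mathlib

/-!
Fix `φ ∈ H⁺` and `ρ > 0`, and take `n > 2 / ρ`. Since `C` is nowhere dense and `φ` is a
homeomorphism, each interval `(i / n, (i + 1) / n)` contains a short interval `[p i, q i]` missing
`φ(C)`. The staircase `κ = ∑ ramp (p i) (q i)` is monotone, within `1` of `n x`, and takes integer
values on `φ(C)`; the convex reparametrisation `bend` sends the integers `0, …, n` to a finite set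
`V` free of 3-term progressions, so `χ = bend ∘ κ ∘ φ` is monotone, `ρ`-close to `φ`, and
`χ(C) ⊆ V`. Then `ψ = (1 - t) χ + t φ` lies in `H⁺` and, for small `t`, `ψ(C)` stays in a thin
neighbourhood of `V`. Near a finite progression-free set every 3-term progression has a step close
to `0`: its three nearby points of `V` satisfy `a + c = 2 b` up to a small error, hence exactly.
-/

open Set

noncomputable section

/-- `A ⊆ ℝ` is *FAP* (free of arithmetic progressions): it contains no 3-term AP. -/
def FAP (A : Set ℝ) : Prop :=
  ¬ ∃ x d : ℝ, 0 < d ∧ x ∈ A ∧ x + d ∈ A ∧ x + 2 * d ∈ A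

/-- `H⁺`: the strictly increasing homeomorphisms of `[0,1]` onto itself, realized as the
subset of `C([0,1], ℝ)` (carrying the sup-norm topology) consisting of the strictly
increasing continuous functions fixing `0` and `1` (such a map is automatically a
homeomorphism of `[0,1]` onto itself). -/
def Hplus : Set C(Set.Icc (0:ℝ) 1, ℝ) :=
  {f | StrictMono f ∧ f ⟨0, by norm_num⟩ = 0 ∧ f ⟨1, by norm_num⟩ = 1}

/-- The image in `ℝ` of a set `C ⊆ [0,1]` under `f : C([0,1], ℝ)`. -/
def imgC (f : C(Set.Icc (0:ℝ) 1, ℝ)) (C : Set ℝ) : Set ℝ :=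
  ⇑f '' (Subtype.val ⁻¹' C)

/-- `H_ε(C)`: the set of `φ ∈ H⁺` such that `φ(C)` has no 3-term AP of step `d ≥ ε`. -/
def Heps (C : Set ℝ) (ε : ℝ) : Set ↥Hplus :=
  {φ | ¬ ∃ x d : ℝ, ε ≤ d ∧ x ∈ imgC φ.1 C ∧ x + d ∈ imgC φ.1 C ∧ x + 2 * d ∈ imgC φ.1 C}

def ramp (p q x : ℝ) : ℝ := max 0 (min 1 ((x - p) / (q - p)))

lemma continuous_ramp (p q : ℝ) : Continuous (ramp p q) := by
  unfold ramp; fun_prop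

lemma monotone_ramp {p q : ℝ} (hpq : p < q) : Monotone (ramp p q) := fun x y hxy => by
  unfold ramp; gcongr

lemma ramp_eq_zero_of_le {p q x : ℝ} (hpq : p < q) (hx : x ≤ p) : ramp p q x = 0 := by
  have : (x - p) / (q - p) ≤ 0 := div_nonpos_of_nonpos_of_nonneg (by linarith) (by linarith)
  exact max_eq_left ((min_le_right _ _).trans this)

lemma ramp_eq_one_of_le {p q x : ℝ} (hpq : p < q) (hx : q ≤ x) : ramp p q x = 1 := by
  have : 1 ≤ (x - p) / (q - p) := by rw [le_div_iff₀ (by linarith)]; linarith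
  simp [ramp, min_eq_left this]

lemma ramp_mem_Icc (p q x : ℝ) : ramp p q x ∈ Icc 0 1 :=
  ⟨le_max_left _ _, max_le zero_le_one (min_le_left _ _)⟩

def stairs (n : ℕ) (p q : ℕ → ℝ) (x : ℝ) : ℝ := ∑ i ∈ Finset.range n, ramp (p i) (q i) x

section stairs

variable {n : ℕ} {p q : ℕ → ℝ}

lemma continuous_stairs : Continuous (stairs n p q) :=
  continuous_finsetSum (Finset.range n) fun i _ => continuous_ramp (p i) (q i)

lemma monotone_stairs (hpq : ∀ i < n, p i < q i) : Monotone (stairs n p q) :=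
  fun _ _ hxy => Finset.sum_le_sum fun i hi => monotone_ramp (hpq i (Finset.mem_range.1 hi)) hxy

lemma stairs_nonneg (x : ℝ) : 0 ≤ stairs n p q x :=
  Finset.sum_nonneg fun _ _ => (ramp_mem_Icc _ _ _).1

lemma stairs_le (x : ℝ) : stairs n p q x ≤ n := by
  simpa [stairs] using
    Finset.sum_le_card_nsmul (Finset.range n) _ 1 fun i _ => (ramp_mem_Icc (p i) (q i) x).2

lemma exists_stairs_eq_natCast {x : ℝ} (hpq : ∀ i < n, p i < q i)
    (hx : ∀ i < n, x ≤ p i ∨ q i ≤ x) : ∃ k ≤ n, stairs n p q x = k := by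
  classical
  refine ⟨(Finset.filter (fun i => q i ≤ x) (Finset.range n)).card,
    (Finset.card_filter_le _ _).trans (Finset.card_range n).le, ?_⟩
  rw [stairs, Finset.card_filter, Nat.cast_sum]
  refine Finset.sum_congr rfl fun i hi => ?_
  have hi := Finset.mem_range.1 hi
  split_ifs with h
  · simp [ramp_eq_one_of_le (hpq i hi) h]
  · simp [ramp_eq_zero_of_le (hpq i hi) ((hx i hi).resolve_right h)]

lemma stairs_natCast_div (h : ∀ i < n, (i : ℝ) / n < p i ∧ p i < q i ∧ q i < (i + 1) / n) {j : ℕ}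
    (hj : j ≤ n) : stairs n p q (j / n) = j := by
  classical
  calc stairs n p q (j / n) = ∑ i ∈ Finset.range n, if i < j then (1 : ℝ) else 0 := by
        refine Finset.sum_congr rfl fun i hi => ?_
        have hi := Finset.mem_range.1 hi
        obtain ⟨hpi, hpq, hqi⟩ := h i hi
        split_ifs with hij
        · refine ramp_eq_one_of_le hpq (hqi.le.trans ?_)
          gcongr
          exact_mod_cast hij
        · refine ramp_eq_zero_of_le hpq (le_trans ?_ hpi.le)
          gcongr
          exact_mod_cast not_lt.1 hij
    _ = j := by
          have : (Finset.range n).filter (· < j) = Finset.range j := by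
            ext i; simp only [Finset.mem_filter, Finset.mem_range]; omega
          simp [Finset.sum_boole, this]

end stairs

lemma abs_sub_lt_of_monotone_of_eq_on_grid {f : ℝ → ℝ} (hf : Monotone f) {n : ℕ} (hn : 0 < n)
    (hgrid : ∀ j ≤ n, f (j / n) = j / n) {x : ℝ} (hx : x ∈ Icc 0 1) : |f x - x| < 1 / n := by
  have hn' : (0 : ℝ) < n := by exact_mod_cast hn
  have hnx : 0 ≤ n * x := mul_nonneg hn'.le hx.1
  have hnx1 : n * x ≤ n := by nlinarith [hx.2]
  have hlow : f (⌊n * x⌋₊ / n) ≤ f x := hf <| by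
    rw [div_le_iff₀ hn']; linarith [Nat.floor_le hnx]
  have hup : f x ≤ f (⌈n * x⌉₊ / n) := hf <| by
    rw [le_div_iff₀ hn']; linarith [Nat.le_ceil (n * x)]
  rw [hgrid _ (Nat.floor_le_of_le hnx1)] at hlow
  rw [hgrid _ (Nat.ceil_le.2 hnx1)] at hup
  have h1 : (⌊n * x⌋₊ : ℝ) / n > x - 1 / n := by
    rw [gt_iff_lt, lt_div_iff₀ hn', sub_mul, one_div_mul_cancel hn'.ne', mul_comm]
    linarith [Nat.lt_floor_add_one (n * x)]
  have h2 : (⌈n * x⌉₊ : ℝ) / n < x + 1 / n := by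
    rw [div_lt_iff₀ hn', add_mul, one_div_mul_cancel hn'.ne']
    linarith [Nat.ceil_lt_add_one hnx]
  rw [abs_lt]; constructor <;> linarith

lemma mul_add_sq_add_ne_two_mul {n M j k l : ℕ} (hM : 2 * n ^ 2 < M) (hj : j ≤ n) (hk : k ≤ n)
    (hl : l ≤ n) (hjl : j ≠ l) : M * j + j ^ 2 + (M * l + l ^ 2) ≠ 2 * (M * k + k ^ 2) := by
  intro h
  zify at *
  -- If `j + l = 2 k` the quadratic terms force `j = l`; otherwise the linear term outweighs them.
  rcases lt_trichotomy ((j : ℤ) + l) (2 * k) with hlt | heq | hgt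
  · nlinarith
  · have : ((j : ℤ) - l) ^ 2 = 0 := by nlinarith
    exact hjl (by exact_mod_cast sub_eq_zero.1 (pow_eq_zero_iff two_ne_zero |>.1 this))
  · nlinarith

def bend (M n : ℕ) (u : ℝ) : ℝ := (M * u + u ^ 2) / (M * n + n ^ 2)

section bend

variable {M n : ℕ}

lemma continuous_bend : Continuous (bend M n) := by
  unfold bend; fun_prop

lemma monotoneOn_bend : MonotoneOn (bend M n) (Ici 0) := fun u hu v _ huv => by
  unfold bend
  have := mem_Ici.1 hu
  gcongr

lemma bend_zero : bend M n 0 = 0 := by simp [bend]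

lemma bend_self (hn : 0 < n) : bend M n n = 1 := div_self (by positivity)

lemma abs_bend_sub_le (hn : 0 < n) {u : ℝ} (hu : u ∈ Icc 0 (n : ℝ)) :
    |bend M n u - u / n| ≤ n / (M + n) := by
  have hn' : (0 : ℝ) < n := by exact_mod_cast hn
  have key : bend M n u - u / n = u * (u - n) / (n * (M + n)) := by
    unfold bend; field_simp; ring
  have hD : 0 < (n : ℝ) * (M + n) := by positivity
  rw [key, abs_div, abs_of_pos hD, abs_mul, abs_of_nonneg hu.1, abs_of_nonpos (by linarith [hu.2]),
    div_le_div_iff₀ hD (by positivity)]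
  have h : u * (n - u) ≤ n * n := mul_le_mul hu.2 (by linarith [hu.1]) (by linarith [hu.2]) hn'.le
  nlinarith [mul_le_mul_of_nonneg_right h (by positivity : (0 : ℝ) ≤ M + n)]

lemma FAP_bend_image (hM : 2 * n ^ 2 < M) : FAP ((fun k : ℕ => bend M n k) '' Iic n) := by
  rintro ⟨x, d, hd, ⟨j, hj, rfl⟩, ⟨k, hk, hxk⟩, ⟨l, hl, hxl⟩⟩
  have hjl : j ≠ l := by rintro rfl; linarith
  have hn : 0 < n := by
    rw [mem_Iic] at hj hl; omega
  apply mul_add_sq_add_ne_two_mul hM hj hk hl hjl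
  have : bend M n j + bend M n l = 2 * bend M n k := by linarith
  simp only [bend] at this
  field_simp at this
  exact_mod_cast (by linarith : (M : ℝ) * j + j ^ 2 + (M * l + l ^ 2) = 2 * (M * k + k ^ 2))

end bend

lemma Set.Finite.exists_pos_le_abs_add_sub_two_mul {V : Set ℝ} (hV : V.Finite) :
    ∃ A > 0, ∀ a ∈ V, ∀ b ∈ V, ∀ c ∈ V, a + c ≠ 2 * b → A ≤ |a + c - 2 * b| := by
  set F := (fun t : ℝ × ℝ × ℝ => t.1 + t.2.2 - 2 * t.2.1) '' (V ×ˢ V ×ˢ V) \ {0}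
  have hF : F.Finite := ((hV.prod (hV.prod hV)).image _).sdiff
  obtain ⟨A, hA, hball⟩ :=
    Metric.mem_nhds_iff.1 (hF.isClosed.isOpen_compl.mem_nhds (fun h => h.2 rfl : (0 : ℝ) ∉ F))
  refine ⟨A, hA, fun a ha b hb c hc habc =>
    not_lt.1 fun hlt => hball ?_ ⟨⟨(a, b, c), ⟨ha, hb, hc⟩, rfl⟩, ?_⟩⟩
  · simpa [Real.dist_eq] using hlt
  · simpa [sub_eq_zero] using habc

lemma FAP.eq_of_add_eq_two_mul {V : Set ℝ} (hV : FAP V) {a b c : ℝ} (ha : a ∈ V) (hb : b ∈ V)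
    (hc : c ∈ V) (h : a + c = 2 * b) : a = b := by
  rcases lt_trichotomy a b with hab | rfl | hba
  · exact (hV ⟨a, b - a, by linarith, ha, by simpa using hb, by convert hc using 1; linarith⟩).elim
  · rfl
  · exact (hV ⟨c, b - c, by linarith, hc, by simpa using hb, by convert ha using 1; linarith⟩).elim

lemma FAP.exists_pos_no_long_AP_near {V : Set ℝ} (hfin : V.Finite) (hV : FAP V) {ε : ℝ}
    (hε : 0 < ε) : ∃ η > 0, ∀ W : Set ℝ, (∀ w ∈ W, ∃ v ∈ V, |w - v| ≤ η) →
      ¬ ∃ x d : ℝ, ε ≤ d ∧ x ∈ W ∧ x + d ∈ W ∧ x + 2 * d ∈ W := by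
  obtain ⟨A, hA, hgap⟩ := hfin.exists_pos_le_abs_add_sub_two_mul
  refine ⟨min (A / 8) (ε / 4), by positivity, fun W hW => ?_⟩
  rintro ⟨x, d, hd, hx, hxd, hxdd⟩
  obtain ⟨a, ha, hxa⟩ := hW _ hx
  obtain ⟨b, hb, hxb⟩ := hW _ hxd
  obtain ⟨c, hc, hxc⟩ := hW _ hxdd
  have hη₁ := min_le_left (A / 8) (ε / 4)
  have hη₂ := min_le_right (A / 8) (ε / 4)
  rw [abs_le] at hxa hxb hxc
  have habc : a + c = 2 * b := by
    by_contra hne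
    have hclose : |a + c - 2 * b| ≤ A / 2 := by rw [abs_le]; constructor <;> linarith
    linarith [hgap a ha b hb c hc hne]
  have := hV.eq_of_add_eq_two_mul ha hb hc habc
  linarith

lemma IsNowhereDense.exists_Icc_disjoint {C : Set ℝ} (hC : IsNowhereDense C) {a b : ℝ}
    (hab : a < b) : ∃ p q, a < p ∧ p < q ∧ q < b ∧ Disjoint (Icc p q) C := by
  have hdense : Dense (closure C)ᶜ :=
    (isClosed_isNowhereDense_iff_compl.1 ⟨isClosed_closure, hC.closure⟩).2
  obtain ⟨z, hzC, hz⟩ := hdense.exists_between hab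
  obtain ⟨l, u, ⟨hlz, hzu⟩, hsub⟩ := mem_nhds_iff_exists_Ioo_subset.1
    ((isClosed_closure.isOpen_compl.inter isOpen_Ioo).mem_nhds ⟨hzC, hz⟩)
  have hIcc : Icc z ((z + u) / 2) ⊆ (closure C)ᶜ ∩ Ioo a b :=
    (Icc_subset_Ioo hlz (by linarith)).trans hsub
  refine ⟨z, (z + u) / 2, hz.1, by linarith, (hIcc ⟨by linarith, le_rfl⟩).2.2, ?_⟩
  exact disjoint_compl_left.mono_right subset_closure |>.mono_left (fun t ht => (hIcc ht).1)

section Hplus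

variable {φ : C(Icc (0 : ℝ) 1, ℝ)}

lemma apply_mem_Icc_of_mem_Hplus (hφ : φ ∈ Hplus) (s : Icc (0 : ℝ) 1) : φ s ∈ Icc 0 1 := by
  obtain ⟨hmono, h0, h1⟩ := hφ
  have hs0 := hmono.monotone (show ⟨0, by norm_num⟩ ≤ s from s.2.1)
  have hs1 := hmono.monotone (show s ≤ ⟨1, by norm_num⟩ from s.2.2)
  rw [h0] at hs0
  rw [h1] at hs1
  exact ⟨hs0, hs1⟩

lemma exists_apply_eq_of_mem_Hplus (hφ : φ ∈ Hplus) {y : ℝ} (hy : y ∈ Icc 0 1) :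
    ∃ s, φ s = y := by
  have := intermediate_value_univ (⟨0, by norm_num⟩ : Icc (0 : ℝ) 1) ⟨1, by norm_num⟩ φ.continuous
  rw [hφ.2.1, hφ.2.2] at this
  exact this hy

lemma exists_gap_of_mem_Hplus (hφ : φ ∈ Hplus) {C : Set ℝ} (hC : IsNowhereDense C) {u w : ℝ}
    (hu : 0 ≤ u) (huw : u < w) (hw : w ≤ 1) :
    ∃ p q, u < p ∧ p < q ∧ q < w ∧ ∀ s : Icc (0 : ℝ) 1, (s : ℝ) ∈ C → φ s ≤ p ∨ q ≤ φ s := by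
  obtain ⟨σ, hσ⟩ := exists_apply_eq_of_mem_Hplus hφ ⟨hu, huw.le.trans hw⟩
  obtain ⟨τ, hτ⟩ := exists_apply_eq_of_mem_Hplus hφ ⟨hu.trans huw.le, hw⟩
  have hστ : σ < τ := hφ.1.lt_iff_lt.1 (hσ ▸ hτ ▸ huw)
  obtain ⟨a, b, hσa, hab, hbτ, hdisj⟩ := hC.exists_Icc_disjoint hστ
  have ha : a ∈ Icc (0 : ℝ) 1 := ⟨σ.2.1.trans hσa.le, hab.le.trans (hbτ.le.trans τ.2.2)⟩
  have hb : b ∈ Icc (0 : ℝ) 1 := ⟨(σ.2.1.trans hσa.le).trans hab.le, hbτ.le.trans τ.2.2⟩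
  refine ⟨φ ⟨a, ha⟩, φ ⟨b, hb⟩, hσ ▸ hφ.1 hσa, hφ.1 hab, hτ ▸ hφ.1 hbτ, fun s hs => ?_⟩
  have : (s : ℝ) ∉ Icc a b := fun h => hdisj.notMem_of_mem_left h hs
  rcases not_and_or.1 this with h | h
  · exact Or.inl (hφ.1 (show s < ⟨a, ha⟩ from not_le.1 h)).le
  · exact Or.inr (hφ.1 (show ⟨b, hb⟩ < s from not_le.1 h)).le

lemma sub_smul_add_smul_mem_Hplus (hφ : φ ∈ Hplus) {χ : C(Icc (0 : ℝ) 1, ℝ)} (hχ : Monotone χ)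
    (hχ0 : χ ⟨0, by norm_num⟩ = 0) (hχ1 : χ ⟨1, by norm_num⟩ = 1) {t : ℝ} (ht0 : 0 < t)
    (ht1 : t ≤ 1) : (1 - t) • χ + t • φ ∈ Hplus := by
  refine ⟨fun s s' hss' => ?_, ?_, ?_⟩
  · simp only [ContinuousMap.add_apply, ContinuousMap.smul_apply, smul_eq_mul]
    have := hχ hss'.le
    have := hφ.1 hss'
    nlinarith
  · simp only [ContinuousMap.add_apply, ContinuousMap.smul_apply, smul_eq_mul, hχ0, hφ.2.1]
    ring
  · simp only [ContinuousMap.add_apply, ContinuousMap.smul_apply, smul_eq_mul, hχ1, hφ.2.2]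
    ring

end Hplus

section staircase

variable {M n : ℕ} {p q : ℕ → ℝ}

lemma monotone_bend_stairs (hpq : ∀ i < n, p i < q i) :
    Monotone fun x => bend M n (stairs n p q x) := fun _ _ hxy =>
  monotoneOn_bend (stairs_nonneg _) (stairs_nonneg _) (monotone_stairs hpq hxy)

lemma abs_bend_stairs_sub_lt (hn : 0 < n) (hM : n ^ 2 ≤ M)
    (h : ∀ i < n, (i : ℝ) / n < p i ∧ p i < q i ∧ q i < (i + 1) / n) {x : ℝ} (hx : x ∈ Icc 0 1) :
    |bend M n (stairs n p q x) - x| < 2 / n := by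
  have hn' : (0 : ℝ) < n := by exact_mod_cast hn
  have hbend := abs_bend_sub_le (M := M) (u := stairs n p q x) hn ⟨stairs_nonneg x, stairs_le x⟩
  have hstairs : |stairs n p q x / n - x| < 1 / n := by
    refine abs_sub_lt_of_monotone_of_eq_on_grid (f := fun x => stairs n p q x / n) ?_ hn ?_ hx
    · exact fun _ _ hxy => div_le_div_of_nonneg_right
        (monotone_stairs (fun i hi => (h i hi).2.1) hxy) hn'.le
    · intro j hj
      simp only [stairs_natCast_div h hj]
  have hMn : (n : ℝ) / (M + n) ≤ 1 / n := by
    rw [div_le_div_iff₀ (by positivity) hn']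
    have : ((n ^ 2 : ℕ) : ℝ) ≤ M := by exact_mod_cast hM
    push_cast at this
    nlinarith
  calc |bend M n (stairs n p q x) - x|
      ≤ |bend M n (stairs n p q x) - stairs n p q x / n| + |stairs n p q x / n - x| :=
        abs_sub_le _ _ _
    _ < 1 / n + 1 / n := by linarith
    _ = 2 / n := by ring

end staircase

lemma exists_monotone_approx_finite_FAP {φ : C(Icc (0 : ℝ) 1, ℝ)} (hφ : φ ∈ Hplus) {C : Set ℝ}
    (hC : IsNowhereDense C) {ρ : ℝ} (hρ : 0 < ρ) :
    ∃ χ : C(Icc (0 : ℝ) 1, ℝ), Monotone χ ∧ χ ⟨0, by norm_num⟩ = 0 ∧ χ ⟨1, by norm_num⟩ = 1 ∧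
      (∀ s, |χ s - φ s| < ρ) ∧
      ∃ V : Set ℝ, V.Finite ∧ FAP V ∧ ∀ s : Icc (0 : ℝ) 1, (s : ℝ) ∈ C → χ s ∈ V := by
  obtain ⟨n, hn⟩ := exists_nat_gt (2 / ρ)
  have hn0 : 0 < n := by exact_mod_cast (by positivity : (0 : ℝ) < 2 / ρ).trans hn
  have hn' : (0 : ℝ) < n := by exact_mod_cast hn0
  have hgaps : ∀ i : ℕ, ∃ a b : ℝ, i < n → (i : ℝ) / n < a ∧ a < b ∧ b < (i + 1) / n ∧
      ∀ s : Icc (0 : ℝ) 1, (s : ℝ) ∈ C → φ s ≤ a ∨ b ≤ φ s := by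
    intro i
    by_cases hi : i < n
    · obtain ⟨a, b, h⟩ := exists_gap_of_mem_Hplus hφ hC (u := i / n) (w := (i + 1) / n)
        (by positivity) (by gcongr; linarith) (by rw [div_le_one hn']; exact_mod_cast hi)
      exact ⟨a, b, fun _ => h⟩
    · exact ⟨0, 0, fun h => (hi h).elim⟩
  choose p q hpq using hgaps
  have hramp : ∀ i < n, (i : ℝ) / n < p i ∧ p i < q i ∧ q i < (i + 1) / n :=
    fun i hi => ⟨(hpq i hi).1, (hpq i hi).2.1, (hpq i hi).2.2.1⟩
  set M := 2 * n ^ 2 + 1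
  set c : ℝ → ℝ := fun x => bend M n (stairs n p q x)
  have hc0 : c 0 = 0 := by
    simpa [c, bend_zero] using congrArg (bend M n) (stairs_natCast_div hramp (Nat.zero_le n))
  have hc1 : c 1 = 1 := by
    simpa [c, div_self hn'.ne', bend_self hn0] using
      congrArg (bend M n) (stairs_natCast_div hramp le_rfl)
  refine ⟨⟨fun s => c (φ s), (continuous_bend.comp continuous_stairs).comp φ.continuous⟩,
    fun s t hst => monotone_bend_stairs (fun i hi => (hramp i hi).2.1) (hφ.1.monotone hst), ?_, ?_,
    fun s => ?_, (fun k : ℕ => bend M n k) '' Iic n, (finite_Iic n).image _,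
    FAP_bend_image (by omega), fun s hs => ?_⟩
  · exact (congrArg c hφ.2.1).trans hc0
  · exact (congrArg c hφ.2.2).trans hc1
  · refine (abs_bend_stairs_sub_lt hn0 (by omega) hramp (apply_mem_Icc_of_mem_Hplus hφ s)).trans ?_
    rwa [div_lt_iff₀ hn', mul_comm, ← div_lt_iff₀ hρ]
  · obtain ⟨k, hk, hκ⟩ := exists_stairs_eq_natCast (fun i hi => (hramp i hi).2.1)
      fun i hi => (hpq i hi).2.2.2 s hs
    exact ⟨k, hk, by simp [c, hκ]⟩

theorem Heps_dense_general (C : Set ℝ) (hnd : IsNowhereDense C)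
    (ε : ℝ) (hε : 0 < ε) : Dense (Heps C ε) := by
  rw [Metric.dense_iff]
  rintro ⟨φ, hφ⟩ ρ hρ
  obtain ⟨χ, hχ, hχ0, hχ1, hχφ, V, hVfin, hV, hχV⟩ := exists_monotone_approx_finite_FAP hφ hnd hρ
  obtain ⟨η, hη, hnoAP⟩ := hV.exists_pos_no_long_AP_near hVfin hε
  set t := min (1 / 2) (η / ρ)
  have ht0 : 0 < t := by positivity
  have ht1 : t ≤ 1 := (min_le_left _ _).trans (by norm_num)
  have htρ : t * ρ ≤ η := (le_div_iff₀ hρ).1 (min_le_right _ _)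
  set ψ := (1 - t) • χ + t • φ
  have hψχ : ∀ s, ψ s - χ s = t * (φ s - χ s) := fun s => by simp [ψ]; ring
  have hψφ : ∀ s, ψ s - φ s = (1 - t) * (χ s - φ s) := fun s => by simp [ψ]; ring
  refine ⟨⟨ψ, sub_smul_add_smul_mem_Hplus hφ hχ hχ0 hχ1 ht0 ht1⟩, ?_, ?_⟩
  · rw [Metric.mem_ball, Subtype.dist_eq, ContinuousMap.dist_lt_iff hρ]
    intro s
    rw [Real.dist_eq, hψφ, abs_mul, abs_of_nonneg (by linarith)]
    exact (mul_le_of_le_one_left (abs_nonneg _) (by linarith)).trans_lt (hχφ s)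
  · refine hnoAP _ ?_
    rintro _ ⟨s, hs, rfl⟩
    refine ⟨χ s, hχV s hs, ?_⟩
    rw [hψχ, abs_mul, abs_of_pos ht0, abs_sub_comm]
    exact (mul_le_mul_of_nonneg_left (hχφ s).le ht0.le).trans htρ

/-- For nowhere dense `C ⊆ [0,1]` and any `ε > 0`, the set `H_ε(C)` is dense in `H⁺`
(with the sup-norm subspace topology). -/
theorem Heps_dense (C : Set ℝ) (hC : C ⊆ Set.Icc 0 1) (hnd : IsNowhereDense C)
    (ε : ℝ) (hε : 0 < ε) : Dense (Heps C ε) :=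
  Heps_dense_general C hnd ε hε
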